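/- arXiv:1911.07061 — 4 statements merged into one kernel-verified Lean document; each statement's English description precedes it below -/
import Mathlib

section
/- Fix constants ξ₀ > 0 and λ₀ > 0, and let φ be a random variable on a probability space with values in [0, 2π). The real stochastic process X(t) = ξ₀·cos(λ₀·t + φ), t ∈ ℝ, is strictly stationary if and only if φ is uniformly distributed on [0, 2π). -/
open MeasureTheory ProbabilityTheory Real

/-- The uniform distribution on `[0, 2π)`: `(1/(2π)) · Leb` restricted to `[0, 2π)`. -/
noncomputable def uniformIco2pi : Measure ℝ :=
  (ENNReal.ofReal (2 * Real.pi))⁻¹ • (volume.restrict (Set.Ico 0 (2 * Real.pi)))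

/-- A real-valued stochastic process `X : ℝ → Ω → ℝ` is strictly stationary w.r.t. `P` if
all its finite-dimensional distributions are invariant under time shifts. -/
def IsStrictlyStationary {Ω : Type*} [MeasurableSpace Ω] (P : Measure Ω)
    (X : ℝ → Ω → ℝ) : Prop :=
  ∀ (n : ℕ) (t : Fin n → ℝ) (s : ℝ),
    Measure.map (fun ω => fun i => X (t i + s) ω) P
      = Measure.map (fun ω => fun i => X (t i) ω) P

section Aux

local instance fact2pi : Fact (0 < 2 * Real.pi) := ⟨Real.two_pi_pos⟩

lemma measurable_mk2pi : Measurable ((↑) : ℝ → AddCircle (2 * Real.pi)) :=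
  AddCircle.measurable_mk'

/-- The Haar probability measure on the circle of circumference `2π`. -/
noncomputable def haarP : Measure (AddCircle (2 * Real.pi)) :=
  (ENNReal.ofReal (2 * Real.pi))⁻¹ • (volume : Measure (AddCircle (2 * Real.pi)))

lemma ofReal_two_pi_ne_zero : (ENNReal.ofReal (2 * Real.pi)) ≠ 0 :=
  (ENNReal.ofReal_pos.mpr (by positivity)).ne'

instance haarP_prob : IsProbabilityMeasure haarP := by
  constructor
  rw [haarP, Measure.smul_apply, AddCircle.measure_univ, smul_eq_mul]
  exact ENNReal.inv_mul_cancel ofReal_two_pi_ne_zero ENNReal.ofReal_ne_top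

instance haarP_haar : Measure.IsAddHaarMeasure haarP :=
  Measure.IsAddHaarMeasure.smul _ (ENNReal.inv_ne_zero.mpr ENNReal.ofReal_ne_top)
    (ENNReal.inv_ne_top.mpr ofReal_two_pi_ne_zero)

lemma haarP_map_add (c : AddCircle (2 * Real.pi)) :
    Measure.map (c + ·) haarP = haarP := by
  rw [haarP, Measure.map_smul, map_add_left_eq_self]

/-- The quotient map pushes the uniform distribution on `[0,2π)` to the Haar probability
measure on the circle. -/
lemma map_mk_uniform :
    Measure.map ((↑) : ℝ → AddCircle (2 * Real.pi)) uniformIco2pi = haarP := by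
  rw [uniformIco2pi, Measure.map_smul, haarP]
  congr 1
  rw [Measure.restrict_congr_set Ico_ae_eq_Ioc]
  have := (AddCircle.measurePreserving_mk (2 * Real.pi) 0).map_eq
  rwa [zero_add] at this

/-- Any translation-invariant probability measure on the circle is the Haar probability
measure. -/
lemma eq_haarP_of_invariant (ν : Measure (AddCircle (2 * Real.pi))) [IsProbabilityMeasure ν]
    (h : ∀ a, Measure.map (a + ·) ν = ν) : ν = haarP := by
  haveI : ν.IsAddLeftInvariant := ⟨h⟩
  have key := Measure.isAddLeftInvariant_eq_smul ν haarP
  have huniv := congrArg (fun m : Measure (AddCircle (2 * Real.pi)) => m Set.univ) key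
  simp only [measure_univ, Measure.smul_apply, smul_eq_mul, mul_one, ENNReal.smul_def] at huniv
  have hc : ν.addHaarScalarFactor haarP = 1 := by exact_mod_cast huniv.symm
  rw [key, hc, one_smul]

/-- Reading points of the circle by their representatives in `[0, 2π)`. -/
noncomputable def circRep : AddCircle (2 * Real.pi) → ℝ :=
  fun y => ((AddCircle.measurableEquivIco (2 * Real.pi) 0 y :
    {x // x ∈ Set.Ico (0 : ℝ) (0 + 2 * Real.pi)}) : ℝ)

lemma measurable_circRep : Measurable circRep :=
  measurable_subtype_coe.comp (AddCircle.measurableEquivIco (2 * Real.pi) 0).measurable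

lemma circRep_coe {x : ℝ} (hx : x ∈ Set.Ico (0 : ℝ) (2 * Real.pi)) :
    circRep (x : AddCircle (2 * Real.pi)) = x := by
  have hx' : x ∈ Set.Ico (0 : ℝ) (0 + 2 * Real.pi) := by rwa [zero_add]
  have h : AddCircle.equivIco (2 * Real.pi) 0 (x : AddCircle (2 * Real.pi)) = ⟨x, hx'⟩ := by
    rw [Equiv.apply_eq_iff_eq_symm_apply]; rfl
  show ((AddCircle.equivIco (2 * Real.pi) 0 (x : AddCircle (2 * Real.pi)) : _) : ℝ) = x
  rw [h]

lemma map_circRep_haarP : Measure.map circRep haarP = uniformIco2pi := by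
  rw [← map_mk_uniform, Measure.map_map measurable_circRep measurable_mk2pi]
  have h : (fun x : ℝ => circRep (x : AddCircle (2 * Real.pi))) =ᵐ[uniformIco2pi] id := by
    have hae : ∀ᵐ x ∂uniformIco2pi, x ∈ Set.Ico (0 : ℝ) (2 * Real.pi) := by
      rw [uniformIco2pi]
      exact Measure.ae_smul_measure (ae_restrict_mem measurableSet_Ico) _
    filter_upwards [hae] with x hx using circRep_coe hx
  rw [show (circRep ∘ fun x : ℝ => (x : AddCircle (2 * Real.pi))) =
      fun x : ℝ => circRep (x : AddCircle (2 * Real.pi)) from rfl,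
    Measure.map_congr h, Measure.map_id]

/-- Recovering the angle from the pair `(cos θ, cos (π/2 + θ))`. -/
lemma arg_eval (θ : ℝ) :
    ((Complex.arg ((Real.cos θ : ℝ) - ((- Real.sin θ : ℝ)) * Complex.I) : ℝ) :
      AddCircle (2 * Real.pi)) = (θ : AddCircle (2 * Real.pi)) := by
  have hz : ((Real.cos θ : ℂ)) - ((- Real.sin θ : ℝ) : ℂ) * Complex.I
      = (Real.cos θ : ℂ) + (Real.sin θ : ℂ) * Complex.I := by push_cast; ring
  rw [hz]
  have := Complex.arg_cos_add_sin_mul_I_coe_angle (θ : Real.Angle)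
  rw [Real.Angle.cos_coe, Real.Angle.sin_coe] at this
  exact this

end Aux

/-- The single harmonic `X(t) = ξ₀ cos (l₀ t + φ)` with `ξ₀, l₀ > 0` and phase `φ` taking
values in `[0, 2π)` is strictly stationary iff `φ` is uniformly distributed on `[0, 2π)`. -/
theorem single_harmonic_strictlyStationary_iff_uniform_phase
    {Ω : Type*} [MeasurableSpace Ω] (P : Measure Ω) [IsProbabilityMeasure P]
    (ξ₀ l₀ : ℝ) (hξ₀ : 0 < ξ₀) (hl₀ : 0 < l₀)
    (φ : Ω → ℝ) (hφmeas : Measurable φ)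
    (hφrange : ∀ ω, φ ω ∈ Set.Ico 0 (2 * Real.pi)) :
    IsStrictlyStationary P (fun t ω => ξ₀ * Real.cos (l₀ * t + φ ω)) ↔
      Measure.map φ P = uniformIco2pi := by
  haveI : Fact (0 < 2 * Real.pi) := ⟨Real.two_pi_pos⟩
  set mkφ : Ω → AddCircle (2 * Real.pi) := fun ω => ((φ ω : ℝ) : AddCircle (2 * Real.pi))
    with hmkφdef
  have hmkφ : Measurable mkφ := measurable_mk2pi.comp hφmeas
  set ν : Measure (AddCircle (2 * Real.pi)) := Measure.map mkφ P with hν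
  haveI : IsProbabilityMeasure ν := Measure.isProbabilityMeasure_map hmkφ.aemeasurable
  -- measurability of the finite-dimensional maps
  have hprocmeas : ∀ (n : ℕ) (c : Fin n → ℝ),
      Measurable (fun ω => fun i => ξ₀ * Real.cos (c i + φ ω)) := by
    intro n c
    exact measurable_pi_lambda _ fun i => ((hφmeas.const_add (c i)).cos.const_mul ξ₀)
  constructor
  · -- stationary → uniform
    intro hS
    have hinv : ∀ a, Measure.map (a + ·) ν = ν := by
      intro a
      refine QuotientAddGroup.induction_on a (fun r => ?_)
      set s : ℝ := r / l₀ with hs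
      have hls : l₀ * s = r := by rw [hs, mul_comm, div_mul_cancel₀ r hl₀.ne']
      set t : Fin 2 → ℝ := ![0, Real.pi / (2 * l₀)] with ht
      have h2 : Measure.map (fun ω => fun i : Fin 2 => ξ₀ * Real.cos (l₀ * (t i + s) + φ ω)) P
          = Measure.map (fun ω => fun i : Fin 2 => ξ₀ * Real.cos (l₀ * (t i) + φ ω)) P :=
        hS 2 t s
      set H : (Fin 2 → ℝ) → AddCircle (2 * Real.pi) :=
        fun v => (((Complex.arg ((v 0 / ξ₀ : ℝ) - (v 1 / ξ₀ : ℝ) * Complex.I) : ℝ)) :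
          AddCircle (2 * Real.pi)) with hH
      have hHmeas : Measurable H := by
        apply measurable_mk2pi.comp
        apply Complex.measurable_arg.comp
        apply Continuous.measurable
        fun_prop
      have hH_eval : ∀ u x : ℝ,
          H (fun i => ξ₀ * Real.cos (l₀ * (t i + u) + x))
            = ((l₀ * u + x : ℝ) : AddCircle (2 * Real.pi)) := by
        intro u x
        have e0 : ξ₀ * Real.cos (l₀ * (t 0 + u) + x) / ξ₀ = Real.cos (l₀ * u + x) := by
          show ξ₀ * Real.cos (l₀ * ((0 : ℝ) + u) + x) / ξ₀ = _
          rw [zero_add]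
          exact mul_div_cancel_left₀ _ hξ₀.ne'
        have e1 : ξ₀ * Real.cos (l₀ * (t 1 + u) + x) / ξ₀ = - Real.sin (l₀ * u + x) := by
          have harg : l₀ * (t 1 + u) + x = Real.pi / 2 + (l₀ * u + x) := by
            show l₀ * (Real.pi / (2 * l₀) + u) + x = _
            field_simp
            ring
          rw [harg, Real.cos_add, Real.cos_pi_div_two, Real.sin_pi_div_two]
          rw [show ξ₀ * (0 * Real.cos (l₀ * u + x) - 1 * Real.sin (l₀ * u + x))
            = ξ₀ * (- Real.sin (l₀ * u + x)) by ring]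
          exact mul_div_cancel_left₀ _ hξ₀.ne'
        show ((Complex.arg ((ξ₀ * Real.cos (l₀ * (t 0 + u) + x) / ξ₀ : ℝ)
            - (ξ₀ * Real.cos (l₀ * (t 1 + u) + x) / ξ₀ : ℝ) * Complex.I) : ℝ) :
            AddCircle (2 * Real.pi)) = _
        rw [e0, e1]
        exact arg_eval (l₀ * u + x)
      have hprs : Measurable (fun ω => fun i : Fin 2 => ξ₀ * Real.cos (l₀ * (t i + s) + φ ω)) :=
        by simpa using hprocmeas 2 (fun i => l₀ * (t i + s))
      have hpr0 : Measurable (fun ω => fun i : Fin 2 => ξ₀ * Real.cos (l₀ * (t i) + φ ω)) :=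
        by simpa using hprocmeas 2 (fun i => l₀ * (t i))
      have hmapped := congrArg (Measure.map H) h2
      rw [Measure.map_map hHmeas hprs, Measure.map_map hHmeas hpr0] at hmapped
      have hLHS : (H ∘ fun ω => fun i : Fin 2 => ξ₀ * Real.cos (l₀ * (t i + s) + φ ω))
          = fun ω => ((r : ℝ) : AddCircle (2 * Real.pi)) + mkφ ω := by
        funext ω
        show H (fun i => ξ₀ * Real.cos (l₀ * (t i + s) + φ ω)) = _
        rw [hH_eval s (φ ω), hls]
        rfl
      have hRHS : (H ∘ fun ω => fun i : Fin 2 => ξ₀ * Real.cos (l₀ * (t i) + φ ω))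
          = mkφ := by
        funext ω
        show H (fun i => ξ₀ * Real.cos (l₀ * (t i) + φ ω)) = _
        have h := hH_eval 0 (φ ω)
        have heq : (fun i : Fin 2 => ξ₀ * Real.cos (l₀ * (t i + 0) + φ ω))
            = fun i : Fin 2 => ξ₀ * Real.cos (l₀ * (t i) + φ ω) := by
          funext i; rw [add_zero]
        rw [heq] at h
        simp only [mul_zero, zero_add] at h
        exact h
      rw [hLHS, hRHS] at hmapped
      calc Measure.map ((↑r : AddCircle (2 * Real.pi)) + ·) ν
          = Measure.map (fun ω => ((r : ℝ) : AddCircle (2 * Real.pi)) + mkφ ω) P := by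
            rw [hν, Measure.map_map (measurable_const_add _) hmkφ]; rfl
        _ = ν := hmapped
    have hνhaar : ν = haarP := eq_haarP_of_invariant ν hinv
    have hmapφ : Measure.map φ P = Measure.map circRep ν := by
      rw [hν, Measure.map_map measurable_circRep hmkφ]
      congr 1
      funext ω
      exact (circRep_coe (hφrange ω)).symm
    rw [hmapφ, hνhaar, map_circRep_haarP]
  · -- uniform → stationary
    intro hμ
    have hνhaar : ν = haarP := by
      have hcomp : mkφ = ((↑) : ℝ → AddCircle (2 * Real.pi)) ∘ φ := rfl
      rw [hν, hcomp, ← Measure.map_map measurable_mk2pi hφmeas, hμ, map_mk_uniform]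
    intro n t s
    set F : AddCircle (2 * Real.pi) → (Fin n → ℝ) :=
      fun y => fun i => ξ₀ * Real.cos_periodic.lift (((l₀ * t i : ℝ) : AddCircle (2 * Real.pi)) + y)
      with hF
    have hccont : Continuous (Real.cos_periodic.lift : AddCircle (2 * Real.pi) → ℝ) := by
      have : Continuous fun x : ℝ =>
          (Real.cos_periodic.lift (x : AddCircle (2 * Real.pi)) : ℝ) := by
        simpa [Function.Periodic.lift_coe] using Real.continuous_cos
      exact continuous_coinduced_dom.mpr this
    have hFmeas : Measurable F := by
      apply measurable_pi_lambda
      intro i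
      exact ((hccont.comp (continuous_const.add continuous_id)).measurable).const_mul ξ₀
    have hFcoe : ∀ (c x : ℝ),
        ξ₀ * Real.cos_periodic.lift (((c : ℝ) : AddCircle (2 * Real.pi))
          + ((x : ℝ) : AddCircle (2 * Real.pi))) = ξ₀ * Real.cos (c + x) := by
      intro c x
      rw [show ((c : ℝ) : AddCircle (2 * Real.pi)) + ((x : ℝ) : AddCircle (2 * Real.pi))
        = ((c + x : ℝ) : AddCircle (2 * Real.pi)) from rfl, Function.Periodic.lift_coe]
    have hshift : ∀ c : ℝ,
        Measure.map (fun ω => ((c + φ ω : ℝ) : AddCircle (2 * Real.pi))) P = haarP := by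
      intro c
      have hcomp : (fun ω => ((c + φ ω : ℝ) : AddCircle (2 * Real.pi)))
          = (fun y => ((c : ℝ) : AddCircle (2 * Real.pi)) + y) ∘ mkφ := rfl
      rw [hcomp, ← Measure.map_map (measurable_const_add _) hmkφ, ← hν, hνhaar, haarP_map_add]
    have key : ∀ c : ℝ,
        Measure.map (fun ω => fun i => ξ₀ * Real.cos (l₀ * t i + (c + φ ω))) P
          = Measure.map F haarP := by
      intro c
      have hm : Measurable fun ω => ((c + φ ω : ℝ) : AddCircle (2 * Real.pi)) :=
        measurable_mk2pi.comp (hφmeas.const_add c)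
      rw [← hshift c, Measure.map_map hFmeas hm]
      congr 1
    show Measure.map (fun ω => fun i => ξ₀ * Real.cos (l₀ * (t i + s) + φ ω)) P
      = Measure.map (fun ω => fun i => ξ₀ * Real.cos (l₀ * (t i) + φ ω)) P
    have h1 : (fun ω => fun i => ξ₀ * Real.cos (l₀ * (t i + s) + φ ω))
        = fun ω => fun i => ξ₀ * Real.cos (l₀ * t i + (l₀ * s + φ ω)) := by
      funext ω i; ring_nf
    have h2 : (fun ω => fun i => ξ₀ * Real.cos (l₀ * (t i) + φ ω))
        = fun ω => fun i => ξ₀ * Real.cos (l₀ * t i + (0 + φ ω)) := by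
      funext ω i; ring_nf
    rw [h1, h2, key (l₀ * s), key 0]
end

section
/- Let ν > 0, let G be a random variable with the Gamma distribution with shape 1 and rate 1/ν (i.e. exponential with mean ν), and let Z be a standard normal random variable independent of G. Then the law of X = √(2G)·Z is the Laplace (double exponential) distribution with density x ↦ (1/(2√ν))·e^{−|x|/√ν} with respect to Lebesgue measure on ℝ. -/
open MeasureTheory ProbabilityTheory Real Set
open scoped ENNReal

/-! Given `G = g`, `X` is a centred Gaussian of variance `2g`, so `X` has the mixture density
`x ↦ ∫ φ_{2g}(x) dγ(g)`. Substituting `g = s²` and completing the square turns it into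
`e^{-|x|/√ν} / (ν√π) · I` with `I = ∫₀^∞ exp(-(a s - b/s)²) ds`, `a = ν^{-1/2}`,
`b = |x|/2`. The Cauchy–Schlömilch trick gives `I = √π / (2a)`, independently of `b`:
the involution `s ↦ b/(a s)` shows that `I` is also the integral of the same integrand
against the weight `b/(a s²)`, so `2a I = ∫₀^∞ (a + b/s²) exp(-(a s - b/s)²) ds`, which is
`∫ exp(-w²) dw = √π` after the substitution `w = a s - b/s`. -/

lemma lintegral_Ioi_comp_sq (f : ℝ → ℝ≥0∞) :
    ∫⁻ x in Ioi 0, f x = ∫⁻ s in Ioi 0, ENNReal.ofReal (2 * s) * f (s ^ 2) := by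
  have himage : (fun s : ℝ => s ^ 2) '' Ioi 0 = Ioi 0 := by
    refine Subset.antisymm (image_subset_iff.2 fun s (hs : 0 < s) => pow_pos hs 2) fun x hx => ?_
    exact ⟨√x, sqrt_pos.2 hx, sq_sqrt (le_of_lt hx)⟩
  have hinj : InjOn (fun s : ℝ => s ^ 2) (Ioi 0) := fun s hs t ht hst =>
    (pow_left_inj₀ (le_of_lt hs) (le_of_lt ht) two_ne_zero).1 hst
  have h := lintegral_image_eq_lintegral_abs_deriv_mul measurableSet_Ioi
    (fun s _ => by simpa using (hasDerivAt_pow 2 s).hasDerivWithinAt) hinj f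
  rw [himage] at h
  rw [h]
  refine setLIntegral_congr_fun measurableSet_Ioi fun s hs => ?_
  rw [abs_of_pos (by simpa using hs)]

lemma lintegral_Ioi_comp_div {c : ℝ} (hc : 0 < c) (f : ℝ → ℝ≥0∞) :
    ∫⁻ x in Ioi 0, f x = ∫⁻ u in Ioi 0, ENNReal.ofReal (c / u ^ 2) * f (c / u) := by
  have himage : (fun u : ℝ => c / u) '' Ioi 0 = Ioi 0 := by
    refine Subset.antisymm (image_subset_iff.2 fun u hu => div_pos hc hu) fun x hx => ?_
    exact ⟨c / x, div_pos hc hx, div_div_cancel₀ hc.ne'⟩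
  have hinj : InjOn (fun u : ℝ => c / u) (Ioi 0) := fun u _ w _ h => by
    simpa [div_div_cancel₀ hc.ne'] using congrArg (c / ·) h
  have hderiv : ∀ u ∈ Ioi (0 : ℝ),
      HasDerivWithinAt (fun u => c / u) (-(c / u ^ 2)) (Ioi 0) u := fun u hu => by
    simpa [div_eq_mul_inv] using ((hasDerivAt_inv (ne_of_gt hu)).const_mul c).hasDerivWithinAt
  have h := lintegral_image_eq_lintegral_abs_deriv_mul measurableSet_Ioi hderiv hinj f
  rw [himage] at h
  rw [h]
  refine setLIntegral_congr_fun measurableSet_Ioi fun u hu => ?_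
  rw [abs_neg, abs_of_pos (div_pos hc (pow_pos hu 2))]

lemma lintegral_comp_mul_sub_div {a b : ℝ} (ha : 0 < a) (hb : 0 < b) (f : ℝ → ℝ≥0∞) :
    ∫⁻ x, f x = ∫⁻ u in Ioi 0, ENNReal.ofReal (a + b / u ^ 2) * f (a * u - b / u) := by
  have hmono : StrictMonoOn (fun u => a * u - b / u) (Ioi 0) := fun u hu w hw huw => by
    have : b / w < b / u := div_lt_div_of_pos_left hb hu huw
    dsimp only
    nlinarith
  have himage : (fun u => a * u - b / u) '' Ioi 0 = univ := by
    refine eq_univ_of_forall fun v => ?_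
    -- the positive root of `a u² - v u - b = 0`
    set r := √(v ^ 2 + 4 * a * b)
    have hr : r ^ 2 = v ^ 2 + 4 * a * b := sq_sqrt (by positivity)
    have hvr : 0 < v + r := by
      have : |v| < r := abs_lt_of_sq_lt_sq (by nlinarith) (sqrt_nonneg _)
      linarith [neg_abs_le v]
    refine ⟨(v + r) / (2 * a), div_pos hvr (by positivity), ?_⟩
    field_simp
    linear_combination hr
  have hderiv : ∀ u ∈ Ioi (0 : ℝ),
      HasDerivWithinAt (fun u => a * u - b / u) (a + b / u ^ 2) (Ioi 0) u := fun u hu => by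
    simp only [div_eq_mul_inv]
    refine (((hasDerivAt_id' u).const_mul a).fun_sub
      ((hasDerivAt_inv (ne_of_gt hu)).const_mul b)).hasDerivWithinAt.congr_deriv ?_
    ring
  have h := lintegral_image_eq_lintegral_abs_deriv_mul measurableSet_Ioi hderiv hmono.injOn f
  rw [himage, Measure.restrict_univ] at h
  rw [h]
  refine setLIntegral_congr_fun measurableSet_Ioi fun u (hu : 0 < u) => ?_
  rw [abs_of_pos (by positivity)]

lemma lintegral_exp_neg_sq :
    ∫⁻ x : ℝ, ENNReal.ofReal (exp (-x ^ 2)) = ENNReal.ofReal √π := by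
  rw [← ofReal_integral_eq_lintegral_ofReal
    (by simpa using integrable_exp_neg_mul_sq one_pos) (ae_of_all _ fun x => (exp_pos _).le)]
  simpa using congrArg ENNReal.ofReal (integral_gaussian 1)

lemma lintegral_Ioi_exp_neg_sq_mul_sub_div {a b : ℝ} (ha : 0 < a) (hb : 0 ≤ b) :
    ∫⁻ u in Ioi 0, ENNReal.ofReal (exp (-(a * u - b / u) ^ 2))
      = ENNReal.ofReal (√π / (2 * a)) := by
  rcases hb.eq_or_lt with rfl | hb
  · have hgauss : ∫ u in Ioi (0 : ℝ), exp (-a ^ 2 * u ^ 2) = √π / (2 * a) := by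
      rw [integral_gaussian_Ioi, sqrt_div pi_pos.le, sqrt_sq ha.le, div_div, mul_comm]
    simp_rw [← hgauss, zero_div, sub_zero, mul_pow, ← neg_mul]
    exact (ofReal_integral_eq_lintegral_ofReal
      (integrable_exp_neg_mul_sq (pow_pos ha 2)).integrableOn
      (ae_of_all _ fun u => (exp_pos _).le)).symm
  set I := ∫⁻ u in Ioi 0, ENNReal.ofReal (exp (-(a * u - b / u) ^ 2))
  have hinvolution : I = ∫⁻ u in Ioi 0,
      ENNReal.ofReal (b / a / u ^ 2) * ENNReal.ofReal (exp (-(a * u - b / u) ^ 2)) := by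
    refine (lintegral_Ioi_comp_div (div_pos hb ha) _).trans
      (setLIntegral_congr_fun measurableSet_Ioi fun u (hu : 0 < u) => ?_)
    rw [show a * (b / a / u) - b / (b / a / u) = -(a * u - b / u) by field_simp; ring, neg_sq]
  have hmeas : Measurable fun u => ENNReal.ofReal (exp (-(a * u - b / u) ^ 2)) := by fun_prop
  have h2a : ENNReal.ofReal (2 * a) * I = ENNReal.ofReal √π := calc
    ENNReal.ofReal (2 * a) * I = ENNReal.ofReal a * I + ENNReal.ofReal a * I := by
      rw [← add_mul, ← ENNReal.ofReal_add ha.le ha.le, two_mul]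
    _ = ∫⁻ u in Ioi 0,
          ENNReal.ofReal (a + b / u ^ 2) * ENNReal.ofReal (exp (-(a * u - b / u) ^ 2)) := by
      nth_rw 2 [hinvolution]
      rw [← lintegral_const_mul _ hmeas, ← lintegral_const_mul' _ _ ENNReal.ofReal_ne_top,
        ← lintegral_add_left (hmeas.const_mul _)]
      refine setLIntegral_congr_fun measurableSet_Ioi fun u (hu : 0 < u) => ?_
      rw [← mul_assoc, ← add_mul, ← ENNReal.ofReal_mul ha.le,
        ← ENNReal.ofReal_add ha.le (by positivity)]
      congr 3
      field_simp
    _ = ENNReal.ofReal √π := by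
      rw [← lintegral_exp_neg_sq, lintegral_comp_mul_sub_div ha hb]
  rw [ENNReal.ofReal_div_of_pos (by positivity),
    ENNReal.eq_div_iff (by simpa using ha) ENNReal.ofReal_ne_top, h2a]

lemma gaussianReal_map_sqrt_mul (v : ℝ) :
    (gaussianReal 0 1).map (√v * ·) = gaussianReal 0 v.toNNReal := by
  rw [gaussianReal_map_const_mul, mul_zero, mul_one]
  congr 1
  ext
  simp [sq_sqrt', Real.coe_toNNReal']

lemma map_sqrt_mul_prod_gaussianReal {μ : Measure ℝ} [SFinite μ] (hμ : ∀ᵐ v ∂μ, 0 < v) :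
    (μ.prod (gaussianReal 0 1)).map (fun p => √p.1 * p.2)
      = volume.withDensity fun x => ∫⁻ v, gaussianPDF 0 v.toNNReal x ∂μ := by
  set f : ℝ × ℝ → ℝ := fun p => √p.1 * p.2
  have hf : Measurable f := by fun_prop
  have hpdf : Measurable fun p : ℝ × ℝ => gaussianPDF 0 p.1.toNNReal p.2 :=
    measurable_uncurry_gaussianPDF.comp <|
      measurable_const.prodMk (measurable_fst.real_toNNReal.prodMk measurable_snd)
  ext s hs
  rw [Measure.map_apply hf hs, Measure.prod_apply (hf hs), withDensity_apply _ hs]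
  calc ∫⁻ v, gaussianReal 0 1 (Prod.mk v ⁻¹' (f ⁻¹' s)) ∂μ
      = ∫⁻ v, gaussianReal 0 v.toNNReal s ∂μ := by
        simp_rw [← gaussianReal_map_sqrt_mul, Measure.map_apply (measurable_const_mul _) hs]
        rfl
    _ = ∫⁻ v, (∫⁻ x in s, gaussianPDF 0 v.toNNReal x) ∂μ := lintegral_congr_ae <|
        hμ.mono fun v (hv : 0 < v) => gaussianReal_apply 0 (by simpa using hv) s
    _ = ∫⁻ x in s, ∫⁻ v, gaussianPDF 0 v.toNNReal x ∂μ :=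
        lintegral_lintegral_swap hpdf.aemeasurable

lemma ae_pos_gammaMeasure (a r : ℝ) : ∀ᵐ x ∂gammaMeasure a r, 0 < x := by
  rw [gammaMeasure, ae_withDensity_iff (f := gammaPDF a r)
    (measurable_gammaPDFReal a r).ennreal_ofReal]
  filter_upwards [compl_mem_ae_iff.2 (measure_singleton (0 : ℝ))] with x hx hpdf
  contrapose! hpdf
  exact gammaPDF_of_neg (lt_of_le_of_ne hpdf hx)

lemma two_mul_exponentialPDF_sq_mul_gaussianPDF {ν s : ℝ} (hν : 0 < ν) (hs : 0 < s) (x : ℝ) :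
    ENNReal.ofReal (2 * s)
        * (exponentialPDF (1 / ν) (s ^ 2) * gaussianPDF 0 (2 * s ^ 2).toNNReal x)
      = ENNReal.ofReal (exp (-|x| / √ν) / (ν * √π))
        * ENNReal.ofReal (exp (-((√ν)⁻¹ * s - |x| / 2 / s) ^ 2)) := by
  have hsν : √ν ^ 2 = ν := sq_sqrt hν.le
  have hsν_pos : 0 < √ν := sqrt_pos.2 hν
  have hsqrt : √(2 * π * (2 * s ^ 2)) = 2 * √π * s := by
    rw [show 2 * π * (2 * s ^ 2) = (2 * √π * s) ^ 2 by
      rw [mul_pow, mul_pow, sq_sqrt pi_pos.le]; ring]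
    exact sqrt_sq (by positivity)
  have hsquare : -(1 / ν * s ^ 2) + -(x - 0) ^ 2 / (2 * (2 * s ^ 2))
      = -((√ν)⁻¹ * s - |x| / 2 / s) ^ 2 + -|x| / √ν := by
    field_simp
    linear_combination (-4 * s ^ 4) * hsν + (√ν ^ 2 * ν) * sq_abs x
  rw [exponentialPDF_of_nonneg (by positivity), gaussianPDF, gaussianPDFReal,
    Real.coe_toNNReal _ (by positivity), hsqrt, ← ENNReal.ofReal_mul (by positivity),
    ← ENNReal.ofReal_mul (by positivity), ← ENNReal.ofReal_mul (by positivity)]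
  congr 1
  calc 2 * s * (1 / ν * exp (-(1 / ν * s ^ 2))
          * ((2 * √π * s)⁻¹ * exp (-(x - 0) ^ 2 / (2 * (2 * s ^ 2)))))
      = (ν * √π)⁻¹ * exp (-(1 / ν * s ^ 2) + -(x - 0) ^ 2 / (2 * (2 * s ^ 2))) := by
        rw [exp_add]; field_simp
    _ = _ := by rw [hsquare, exp_add]; ring

lemma lintegral_gaussianPDF_two_mul_expMeasure {ν : ℝ} (hν : 0 < ν) (x : ℝ) :
    ∫⁻ g, gaussianPDF 0 (2 * g).toNNReal x ∂expMeasure (1 / ν)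
      = ENNReal.ofReal (1 / (2 * √ν) * exp (-|x| / √ν)) := by
  have hsν_pos : 0 < √ν := sqrt_pos.2 hν
  have hpdf : Measurable fun g : ℝ => gaussianPDF 0 (2 * g).toNNReal x :=
    measurable_uncurry_gaussianPDF.comp <|
      measurable_const.prodMk ((measurable_id.const_mul 2).real_toNNReal.prodMk measurable_const)
  calc ∫⁻ g, gaussianPDF 0 (2 * g).toNNReal x ∂expMeasure (1 / ν)
      = ∫⁻ g in Ioi 0, gaussianPDF 0 (2 * g).toNNReal x ∂expMeasure (1 / ν) := by
        have hpos : ∀ᵐ g ∂expMeasure (1 / ν), g ∈ Ioi 0 := ae_pos_gammaMeasure 1 (1 / ν)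
        rw [Measure.restrict_eq_self_of_ae_mem hpos]
    _ = ∫⁻ g in Ioi 0, exponentialPDF (1 / ν) g * gaussianPDF 0 (2 * g).toNNReal x :=
        setLIntegral_withDensity_eq_setLIntegral_mul _
          (measurable_exponentialPDFReal _).ennreal_ofReal hpdf measurableSet_Ioi
    _ = ∫⁻ s in Ioi 0, ENNReal.ofReal (exp (-|x| / √ν) / (ν * √π))
          * ENNReal.ofReal (exp (-((√ν)⁻¹ * s - |x| / 2 / s) ^ 2)) := by
        rw [lintegral_Ioi_comp_sq]
        exact setLIntegral_congr_fun measurableSet_Ioi fun s hs =>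
          two_mul_exponentialPDF_sq_mul_gaussianPDF hν hs x
    _ = ENNReal.ofReal (1 / (2 * √ν) * exp (-|x| / √ν)) := by
        rw [lintegral_const_mul' _ _ ENNReal.ofReal_ne_top,
          lintegral_Ioi_exp_neg_sq_mul_sub_div (inv_pos.2 hsν_pos) (by positivity),
          ← ENNReal.ofReal_mul (by positivity)]
        congr 1
        field_simp
        rw [sq_sqrt hν.le]

/-- If `G` is exponential with mean `ν` (i.e. `Gamma(shape 1, rate 1/ν)`) and `Z` is a
standard normal independent of `G`, then `X = √(2G) · Z` has the Laplace distribution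
with density `x ↦ (1/(2√ν)) e^{-|x|/√ν}`. -/
theorem law_sqrt_two_exponential_mul_gaussian_eq_laplace
    {Ω : Type*} [MeasurableSpace Ω] (P : Measure Ω) [IsProbabilityMeasure P]
    (ν : ℝ) (hν : 0 < ν)
    (G Z : Ω → ℝ) (hGmeas : Measurable G) (hZmeas : Measurable Z)
    (hG : Measure.map G P = gammaMeasure 1 (1 / ν))
    (hZ : Measure.map Z P = gaussianReal 0 1)
    (hindep : IndepFun G Z P) :
    Measure.map (fun ω => Real.sqrt (2 * G ω) * Z ω) P
      = volume.withDensity fun x : ℝ =>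
          ENNReal.ofReal ((1 / (2 * Real.sqrt ν)) * Real.exp (-|x| / Real.sqrt ν)) := by
  have h2G : Measurable fun ω => 2 * G ω := hGmeas.const_mul 2
  have : IsProbabilityMeasure (expMeasure (1 / ν)) :=
    isProbabilityMeasure_expMeasure (by positivity)
  have hlaw2G : P.map (fun ω => 2 * G ω) = (expMeasure (1 / ν)).map (2 * ·) := by
    rw [expMeasure, ← hG, Measure.map_map (measurable_const_mul 2) hGmeas]
    rfl
  have hpair : P.map (fun ω => (2 * G ω, Z ω))
      = ((expMeasure (1 / ν)).map (2 * ·)).prod (gaussianReal 0 1) := by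
    rw [← hlaw2G, ← hZ]
    exact (indepFun_iff_map_prod_eq_prod_map_map h2G.aemeasurable hZmeas.aemeasurable).1
      (hindep.comp (measurable_const_mul 2) measurable_id)
  have hpos : ∀ᵐ v ∂(expMeasure (1 / ν)).map (2 * ·), 0 < v :=
    (ae_map_iff (measurable_const_mul 2).aemeasurable measurableSet_Ioi).2 <|
      (ae_pos_gammaMeasure 1 (1 / ν)).mono fun g hg => by positivity
  rw [show (fun ω => √(2 * G ω) * Z ω)
      = (fun p : ℝ × ℝ => √p.1 * p.2) ∘ fun ω => (2 * G ω, Z ω) from rfl,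
    ← Measure.map_map (by fun_prop) (h2G.prodMk hZmeas), hpair,
    map_sqrt_mul_prod_gaussianReal hpos]
  congr 1
  funext x
  rw [(measurableEmbedding_mulLeft₀ two_ne_zero).lintegral_map,
    lintegral_gaussianPDF_two_mul_expMeasure hν x]
end

section
/- Let (ξᵢ)_{i∈ℕ} be real numbers with Σ_{i} |ξᵢ| < ∞, let (λᵢ)_{i∈ℕ} be pairwise distinct positive real numbers, and let (φᵢ)_{i∈ℕ} be real numbers. Then the series X(t) = Σ_{i} ξᵢ·cos(λᵢ·t + φᵢ) converges absolutely and uniformly on ℝ, and for every τ ∈ ℝ, (1/T)·∫₀^T X(t)·X(t + τ) dt → Σ_{i} (ξᵢ²/2)·cos(λᵢ·τ) as T → ∞. -/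
open Real Filter Finset intervalIntegral MeasureTheory

/-!
Multiplying out the two series gives a double series of products of harmonics, the `(i, j)`
term being bounded by `|ξᵢ| |ξⱼ|`. By the product-to-sum formula, each product is a half-sum of
two harmonics: one of frequency `λᵢ + λⱼ > 0` and one of frequency `λᵢ - λⱼ`. A harmonic of
nonzero frequency has bounded integral, hence time average `O(1/T)`, so only the diagonal
`i = j` contributes, with `ξᵢ² cos (λᵢ τ) / 2`. The summable bound `|ξᵢ| |ξⱼ|` lets the integral
and then the limit `T → ∞` pass through the double series (dominated convergence).
-/

open scoped Topology

noncomputable def timeAverage (f : ℝ → ℝ) (T : ℝ) : ℝ :=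
  (1 / T) * ∫ t in (0:ℝ)..T, f t

lemma timeAverage_const_mul (c : ℝ) (f : ℝ → ℝ) (T : ℝ) :
    timeAverage (fun t => c * f t) T = c * timeAverage f T := by
  simp only [timeAverage, intervalIntegral.integral_const_mul]
  ring

lemma abs_timeAverage_le {f : ℝ → ℝ} {C T : ℝ} (hf : ∀ t, |f t| ≤ C) (hT : 0 < T) :
    |timeAverage f T| ≤ C := by
  have hint : |∫ t in (0:ℝ)..T, f t| ≤ C * T := by
    simpa [abs_of_pos hT] using norm_integral_le_of_norm_le_const (a := 0) (b := T)
      fun t _ => (norm_eq_abs (f t)).trans_le (hf t)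
  rw [timeAverage, abs_mul, abs_of_pos (by positivity), one_div_mul_eq_div]
  exact div_le_of_le_mul₀ hT.le ((abs_nonneg _).trans (hf 0)) hint

lemma integral_cos_mul_add {ω : ℝ} (hω : ω ≠ 0) (θ T : ℝ) :
    ∫ t in (0:ℝ)..T, cos (ω * t + θ) = (sin (ω * T + θ) - sin θ) / ω := by
  rw [integral_comp_mul_add cos hω θ, integral_cos]
  simp [smul_eq_mul, div_eq_inv_mul]

lemma tendsto_timeAverage_cos_mul_add (ω θ : ℝ) :
    Tendsto (timeAverage fun t => cos (ω * t + θ)) atTop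
      (𝓝 (if ω = 0 then cos θ else 0)) := by
  split_ifs with hω
  · refine tendsto_const_nhds.congr' ?_
    filter_upwards [eventually_ne_atTop 0] with T hT
    simp [timeAverage, hω, hT]
  · have hbdd : IsBoundedUnder (· ≤ ·) atTop
        (norm ∘ fun T => (sin (ω * T + θ) - sin θ) / ω) := by
      refine isBoundedUnder_of ⟨2 / |ω|, fun T => ?_⟩
      rw [Function.comp_apply, norm_div, norm_eq_abs, norm_eq_abs]
      gcongr
      exact (abs_sub _ _).trans (by linarith [abs_sin_le_one (ω * T + θ), abs_sin_le_one θ])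
    have h := (tendsto_inv_atTop_zero (𝕜 := ℝ)).zero_mul_isBoundedUnder_le hbdd
    refine h.congr fun T => ?_
    rw [timeAverage, integral_cos_mul_add hω, one_div]

lemma timeAverage_cos_mul_cos (a b α β T : ℝ) :
    timeAverage (fun t => cos (a * t + α) * cos (b * t + β)) T =
      (timeAverage (fun t => cos ((a - b) * t + (α - β))) T +
        timeAverage (fun t => cos ((a + b) * t + (α + β))) T) / 2 := by
  have hcont : ∀ c γ : ℝ, IntervalIntegrable (fun t => cos (c * t + γ)) volume 0 T :=
    fun c γ => (continuous_cos.comp (by fun_prop)).intervalIntegrable _ _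
  have hprod : ∀ t, cos (a * t + α) * cos (b * t + β) =
      (cos ((a - b) * t + (α - β)) + cos ((a + b) * t + (α + β))) / 2 := fun t => by
    rw [show (a - b) * t + (α - β) = (a * t + α) - (b * t + β) by ring,
      show (a + b) * t + (α + β) = (a * t + α) + (b * t + β) by ring, ← two_mul_cos_mul_cos]
    ring
  simp only [timeAverage, hprod, intervalIntegral.integral_div,
    integral_add (hcont _ _) (hcont _ _)]
  ring

lemma tendsto_timeAverage_cos_mul_cos {a b : ℝ} (hab : a + b ≠ 0) (α β : ℝ) :
    Tendsto (timeAverage fun t => cos (a * t + α) * cos (b * t + β)) atTop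
      (𝓝 (if a = b then cos (α - β) / 2 else 0)) := by
  have h := ((tendsto_timeAverage_cos_mul_add (a - b) (α - β)).add
    (tendsto_timeAverage_cos_mul_add (a + b) (α + β))).div_const 2
  simp only [sub_eq_zero, if_neg hab, add_zero, ite_div, zero_div] at h
  exact h.congr fun T => (timeAverage_cos_mul_cos a b α β T).symm

lemma tendsto_timeAverage_cos_mul_cos_shift (x y : ℝ) {a b : ℝ} (hab : a + b ≠ 0) (α β τ : ℝ) :
    Tendsto (timeAverage fun t => x * cos (a * t + α) * (y * cos (b * (t + τ) + β))) atTop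
      (𝓝 (if a = b then x * y / 2 * cos (α - β - a * τ) else 0)) := by
  have h := (tendsto_timeAverage_cos_mul_cos hab α (b * τ + β)).const_mul (x * y)
  simp only [← timeAverage_const_mul] at h
  convert h using 2
  · ext t
    ring_nf
  · split_ifs with hab'
    · rw [hab']
      ring_nf
    · rw [mul_zero]

section Series

variable {ι : Type*} [Countable ι] {F : ι → ℝ → ℝ} {C : ι → ℝ}

lemma timeAverage_tsum (hF : ∀ i, AEStronglyMeasurable (F i)) (hC : Summable C)
    (hFC : ∀ i t, |F i t| ≤ C i) (T : ℝ) :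
    timeAverage (fun t => ∑' i, F i t) T = ∑' i, timeAverage (F i) T := by
  have hsum : HasSum (fun i => ∫ t in (0:ℝ)..T, F i t) (∫ t in (0:ℝ)..T, ∑' i, F i t) :=
    hasSum_integral_of_dominated_convergence (fun i _ => C i) (fun i => (hF i).restrict)
      (fun i => ae_of_all _ fun t _ => hFC i t) (ae_of_all _ fun _ _ => hC)
      intervalIntegrable_const
      (ae_of_all _ fun t _ => (hC.of_norm_bounded (hFC · t)).hasSum)
  exact (hsum.mul_left (1 / T)).tsum_eq.symm

lemma tendsto_timeAverage_tsum {L : ι → ℝ} (hF : ∀ i, AEStronglyMeasurable (F i))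
    (hC : Summable C) (hFC : ∀ i t, |F i t| ≤ C i)
    (hL : ∀ i, Tendsto (timeAverage (F i)) atTop (𝓝 (L i))) :
    Tendsto (timeAverage fun t => ∑' i, F i t) atTop (𝓝 (∑' i, L i)) := by
  have hbound : ∀ᶠ T in atTop, ∀ i, ‖timeAverage (F i) T‖ ≤ C i := by
    filter_upwards [eventually_gt_atTop 0] with T hT i
    exact abs_timeAverage_le (hFC i) hT
  exact (tendsto_tsum_of_dominated_convergence hC hL hbound).congr fun T =>
    (timeAverage_tsum hF hC hFC T).symm

end Series

lemma tsum_prod_ite_fst_eq_snd {α M : Type*} [DecidableEq α] [AddCommMonoid M]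
    [TopologicalSpace M] (g : α → M) :
    ∑' p : α × α, (if p.1 = p.2 then g p.1 else 0) = ∑' i, g i := by
  rw [← Function.Injective.tsum_eq (g := fun i : α => (i, i)) (fun i j h => congrArg Prod.fst h)]
  · simp
  · rintro ⟨i, j⟩ hp
    obtain rfl : i = j := by
      by_contra h
      exact hp (by simp [h])
    exact ⟨i, rfl⟩

/-- The main pathwise ergodic statement: for a signal made of infinitely many
harmonics with absolutely summable amplitudes and pairwise distinct positive
frequencies, the series converges absolutely and uniformly on `ℝ`, and the
time-average autocovariance converges to `∑ ξᵢ² cos (λᵢ τ) / 2`. -/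
theorem time_average_autocovariance_series
    (ξ φ : ℕ → ℝ) (l : ℕ → ℝ)
    (hsum : Summable fun i => |ξ i|)
    (hlpos : ∀ i, 0 < l i) (hldist : Function.Injective l) :
    (∀ t : ℝ, Summable fun i => |ξ i * Real.cos (l i * t + φ i)|) ∧
    TendstoUniformly
      (fun N : ℕ => fun t : ℝ => ∑ i ∈ Finset.range N, ξ i * Real.cos (l i * t + φ i))
      (fun t : ℝ => ∑' i, ξ i * Real.cos (l i * t + φ i)) atTop ∧
    (∀ τ : ℝ,
      Tendsto
        (fun T : ℝ =>
          (1 / T) * ∫ t in (0:ℝ)..T,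
            (∑' i, ξ i * Real.cos (l i * t + φ i)) *
              (∑' i, ξ i * Real.cos (l i * (t + τ) + φ i)))
        atTop (nhds (∑' i, (ξ i ^ 2 / 2) * Real.cos (l i * τ)))) := by
  have hterm : ∀ i s, |ξ i * cos s| ≤ |ξ i| := fun i s => by
    rw [abs_mul]
    exact mul_le_of_le_one_right (abs_nonneg _) (abs_cos_le_one s)
  have habs : ∀ t, Summable fun i => |ξ i * cos (l i * t + φ i)| := fun t =>
    hsum.of_nonneg_of_le (fun i => abs_nonneg _) fun i => hterm i _
  refine ⟨habs, tendstoUniformly_tsum_nat hsum fun i t => hterm i _, fun τ => ?_⟩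
  have hprod : ∀ t, (∑' i, ξ i * cos (l i * t + φ i)) * (∑' i, ξ i * cos (l i * (t + τ) + φ i)) =
      ∑' p : ℕ × ℕ, ξ p.1 * cos (l p.1 * t + φ p.1) * (ξ p.2 * cos (l p.2 * (t + τ) + φ p.2)) :=
    fun t => tsum_mul_tsum_of_summable_norm (by simpa only [norm_eq_abs] using habs t)
      (by simpa only [norm_eq_abs] using habs (t + τ))
  simp only [hprod]
  rw [← tsum_prod_ite_fst_eq_snd]
  refine tendsto_timeAverage_tsum (fun p => Continuous.aestronglyMeasurable (by fun_prop))
    (hsum.mul_of_nonneg hsum (fun _ => abs_nonneg _) fun _ => abs_nonneg _)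
    (fun p t => (abs_mul _ _).trans_le (mul_le_mul (hterm _ _) (hterm _ _) (abs_nonneg _)
      (abs_nonneg _))) fun ⟨i, j⟩ => ?_
  convert tendsto_timeAverage_cos_mul_cos_shift (ξ i) (ξ j) (add_pos (hlpos i) (hlpos j)).ne'
    (φ i) (φ j) τ using 2
  simp only [hldist.eq_iff]
  split_ifs with hij
  · obtain rfl : i = j := hij
    rw [sub_self, zero_sub, cos_neg, pow_two, mul_div_assoc]
  · rfl
end

section
/- Let Λ be a measure on (0,∞) with Λ([x,∞)) < ∞ for every x > 0, and define Λ⁻¹(u) = inf{x > 0 : Λ([x,∞)) < u} for u > 0. Then for every x > 0, the Lebesgue measure of the set {u ∈ (0,∞) : Λ⁻¹(u) ≥ x} equals Λ([x,∞)). Consequently, for every measurable g : (0,∞) → [0,∞], one has ∫_{{u>0 : Λ⁻¹(u) > 0}} g(Λ⁻¹(u)) du = ∫_{(0,∞)} g(x) dΛ(x). -/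
/-! For `u > 0`, the tail `x ↦ Λ [x, ∞)` is antitone, tends to `0` at infinity and is
left-continuous (continuity of `Λ` from above), so `x ≤ Λ⁻¹ u ↔ u ≤ Λ [x, ∞)` for `x > 0`: the
preimage of `[x, ∞)` under `Λ⁻¹` is the interval `(0, Λ [x, ∞)]`. Hence the push-forward of
Lebesgue measure by `Λ⁻¹` agrees with `Λ` on every `[x, ∞)` with `x > 0`; these sets have finite
measure and generate the Borel sets of `(0, ∞)`, so the two measures coincide there, and the change
of variables is integration against this push-forward. -/

open MeasureTheory Set

noncomputable def levyTailInv (Λ : Measure ℝ) (u : ℝ) : ℝ :=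
  sInf {x : ℝ | 0 < x ∧ Λ (Set.Ici x) < ENNReal.ofReal u}

open Filter Topology
open scoped ENNReal

theorem tendsto_measure_Ici_atTop {α : Type*} [MeasurableSpace α] [LinearOrder α]
    [TopologicalSpace α] [OrderClosedTopology α] [OpensMeasurableSpace α] [NoMaxOrder α]
    [(atTop : Filter α).IsCountablyGenerated] (μ : Measure α) (hfin : ∃ x, μ (Ici x) ≠ ∞) :
    Tendsto (fun x ↦ μ (Ici x)) atTop (𝓝 0) := by
  have hempty : ⋂ x : α, Ici x = ∅ :=
    iInter_eq_empty_iff.2 fun x ↦ (exists_gt x).imp fun _ hy ↦ hy.not_ge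
  have h := tendsto_measure_iInter_atTop (μ := μ)
    (fun x ↦ measurableSet_Ici.nullMeasurableSet) (fun _ _ hxy ↦ Ici_subset_Ici.2 hxy) hfin
  rwa [hempty, measure_empty] at h

theorem tendsto_measure_Ici_nhdsLT {α : Type*} [MeasurableSpace α] [LinearOrder α]
    [DenselyOrdered α] [TopologicalSpace α] [OrderTopology α] [FirstCountableTopology α]
    [OpensMeasurableSpace α] (μ : Measure α) {x : α} (hfin : ∃ y < x, μ (Ici y) ≠ ∞) :
    Tendsto (fun y ↦ μ (Ici y)) (𝓝[<] x) (𝓝 (μ (Ici x))) := by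
  have hinter : ⋂ y < x, Ici y = Ici x := by
    ext z
    simpa using ⟨le_of_forall_lt_imp_le_of_dense, fun hxz _ hy ↦ hy.le.trans hxz⟩
  -- continuity from above along `𝓝[>]` in the order dual
  have h := tendsto_measure_biInter_gt (ι := αᵒᵈ) (μ := μ) (s := fun y ↦ Ici (OrderDual.ofDual y))
    (a := OrderDual.toDual x) (fun _ _ ↦ measurableSet_Ici.nullMeasurableSet)
    (fun _ _ _ hij ↦ Ici_subset_Ici.2 hij) hfin
  rwa [← hinter]

theorem Measure.restrict_Ioi_eq_of_measure_Ici_eq {α : Type*} [ConditionallyCompleteLinearOrder α]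
    [DenselyOrdered α] [NoMaxOrder α] [TopologicalSpace α] [OrderTopology α]
    [SecondCountableTopology α] [MeasurableSpace α] [BorelSpace α] {μ ν : Measure α} {a : α}
    (hfin : ∀ b > a, μ (Ici b) ≠ ∞) (h : ∀ b > a, μ (Ici b) = ν (Ici b)) :
    μ.restrict (Ioi a) = ν.restrict (Ioi a) := by
  obtain ⟨b, -, hab, hb⟩ := exists_seq_strictAnti_tendsto a
  rw [← iUnion_Ici_eq_Ioi_of_lt_of_tendsto hab hb, Measure.restrict_iUnion_congr]
  intro n
  have : IsFiniteMeasure (μ.restrict (Ici (b n))) := ⟨by simpa using (hfin _ (hab n)).lt_top⟩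
  refine Measure.ext_of_Ici _ _ fun c ↦ ?_
  rw [Measure.restrict_apply measurableSet_Ici, Measure.restrict_apply measurableSet_Ici,
    Ici_inter_Ici]
  exact h _ ((hab n).trans_le le_sup_right)

section levyTailInv

variable (Λ : Measure ℝ)

theorem levyTailInv_of_nonpos {u : ℝ} (hu : u ≤ 0) : levyTailInv Λ u = 0 := by
  simp [levyTailInv, ENNReal.ofReal_of_nonpos hu]

theorem levyTailInv_nonneg (u : ℝ) : 0 ≤ levyTailInv Λ u :=
  Real.sInf_nonneg fun _ hx ↦ hx.1.le

theorem setOf_pos_and_levyTailInv {p : ℝ → Prop} (hp : ∀ y, p y → 0 < y) :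
    {u | 0 < u ∧ p (levyTailInv Λ u)} = {u | p (levyTailInv Λ u)} :=
  ext fun _ ↦ and_iff_right_of_imp fun h ↦
    lt_of_not_ge fun hu ↦ (hp _ h).ne' (levyTailInv_of_nonpos Λ hu)

variable {Λ} (htail : ∀ x : ℝ, 0 < x → Λ (Ici x) < ⊤)
include htail

theorem le_levyTailInv_iff {x u : ℝ} (hx : 0 < x) (hu : 0 < u) :
    x ≤ levyTailInv Λ u ↔ ENNReal.ofReal u ≤ Λ (Ici x) := by
  have hu' : 0 < ENNReal.ofReal u := ENNReal.ofReal_pos.2 hu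
  have hne : {y : ℝ | 0 < y ∧ Λ (Ici y) < ENNReal.ofReal u}.Nonempty :=
    (((tendsto_measure_Ici_atTop Λ ⟨x, (htail x hx).ne⟩).eventually (gt_mem_nhds hu')).and
      (eventually_gt_atTop 0)).exists.imp fun _ hy ↦ ⟨hy.2, hy.1⟩
  rw [levyTailInv, le_csInf_iff ⟨0, fun _ hy ↦ hy.1.le⟩ hne]
  constructor
  · intro h
    by_contra! hlt
    have hfin : ∃ y < x, Λ (Ici y) ≠ ∞ := ⟨x / 2, by linarith, (htail _ (by linarith)).ne⟩
    obtain ⟨y, hyu, hy0, hyx⟩ := (((tendsto_measure_Ici_nhdsLT Λ hfin).eventually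
      (gt_mem_nhds hlt)).and (Ioo_mem_nhdsLT hx)).exists
    exact (h y ⟨hy0, hyu⟩).not_gt hyx
  · rintro h y ⟨-, hyu⟩
    by_contra! hyx
    exact (h.trans_lt ((measure_mono (Ici_subset_Ici.2 hyx.le)).trans_lt hyu)).false

theorem preimage_levyTailInv_Ici {x : ℝ} (hx : 0 < x) :
    levyTailInv Λ ⁻¹' Ici x = Ioc 0 (Λ (Ici x)).toReal := by
  ext u
  rcases le_or_gt u 0 with hu | hu
  · simp [levyTailInv_of_nonpos Λ hu, hx.not_ge, hu.not_gt]
  · simp [hu, le_levyTailInv_iff htail hx hu, ENNReal.ofReal_le_iff_le_toReal (htail x hx).ne]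

theorem measurable_levyTailInv : Measurable (levyTailInv Λ) := by
  refine measurable_of_Ici fun x ↦ ?_
  rcases le_or_gt x 0 with hx | hx
  · have : levyTailInv Λ ⁻¹' Ici x = univ :=
      eq_univ_of_forall fun u ↦ hx.trans (levyTailInv_nonneg Λ u)
    exact this ▸ MeasurableSet.univ
  · rw [preimage_levyTailInv_Ici htail hx]
    exact measurableSet_Ioc

theorem volume_preimage_levyTailInv_Ici {x : ℝ} (hx : 0 < x) :
    volume (levyTailInv Λ ⁻¹' Ici x) = Λ (Ici x) := by
  rw [preimage_levyTailInv_Ici htail hx, Real.volume_Ioc, sub_zero,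
    ENNReal.ofReal_toReal (htail x hx).ne]

end levyTailInv

theorem levyTailInv_measure_preimage_and_change_of_variables_general
    (Λ : Measure ℝ)
    (htail : ∀ x : ℝ, 0 < x → Λ (Set.Ici x) < ⊤) :
    (∀ x : ℝ, 0 < x →
        volume {u : ℝ | 0 < u ∧ x ≤ levyTailInv Λ u} = Λ (Set.Ici x)) ∧
      (∀ g : ℝ → ENNReal, Measurable g →
        ∫⁻ u in {u : ℝ | 0 < u ∧ 0 < levyTailInv Λ u}, g (levyTailInv Λ u)
          = ∫⁻ x in Set.Ioi (0:ℝ), g x ∂Λ) := by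
  refine ⟨fun x hx ↦ ?_, fun g hg ↦ ?_⟩
  · rw [setOf_pos_and_levyTailInv Λ fun y ↦ hx.trans_le]
    exact volume_preimage_levyTailInv_Ici htail hx
  · have hmap : (volume.map (levyTailInv Λ)).restrict (Ioi 0) = Λ.restrict (Ioi 0) := by
      refine Measure.restrict_Ioi_eq_of_measure_Ici_eq (fun b hb ↦ ?_) fun b hb ↦ ?_ <;>
        rw [Measure.map_apply (measurable_levyTailInv htail) measurableSet_Ici,
          volume_preimage_levyTailInv_Ici htail hb]
      exact (htail b hb).ne
    rw [setOf_pos_and_levyTailInv Λ fun _ ↦ id, ← hmap,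
      setLIntegral_map measurableSet_Ioi hg (measurable_levyTailInv htail)]
    rfl

/-- Distributional identity underlying the inverse Lévy measure method: for every `x > 0`
the Lebesgue measure of `{u > 0 : Λ⁻¹(u) ≥ x}` equals `Λ([x, ∞))`; consequently for
every measurable `g : (0,∞) → [0,∞]`,
`∫_{{u > 0 : Λ⁻¹(u) > 0}} g(Λ⁻¹(u)) du = ∫_{(0,∞)} g dΛ`. -/
theorem levyTailInv_measure_preimage_and_change_of_variables
    (Λ : Measure ℝ) (hsupp : Λ (Set.Iic 0) = 0)
    (htail : ∀ x : ℝ, 0 < x → Λ (Set.Ici x) < ⊤) :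
    (∀ x : ℝ, 0 < x →
        volume {u : ℝ | 0 < u ∧ x ≤ levyTailInv Λ u} = Λ (Set.Ici x)) ∧
      (∀ g : ℝ → ENNReal, Measurable g →
        ∫⁻ u in {u : ℝ | 0 < u ∧ 0 < levyTailInv Λ u}, g (levyTailInv Λ u)
          = ∫⁻ x in Set.Ioi (0:ℝ), g x ∂Λ) :=
  levyTailInv_measure_preimage_and_change_of_variables_general Λ htail
end
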